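/- The Jacobson radical of the contracted semigroup algebra ℚ₀T¹ equals the one-dimensional ℚ-subspace spanned by the image of e − f; in particular it is a two-sided ideal of square zero and ℚ₀T¹ modulo its Jacobson radical is isomorphic to ℚ × ℚ. -/

import Mathlib

/-- The four-element monoid `T¹ = {1, e, f, θ}` with `θ` an absorbing zero,
`e² = e`, `f² = f`, `ef = f`, `fe = e`. -/
inductive T1 : Type
  | one : T1
  | e : T1
  | f : T1
  | theta : T1
deriving DecidableEq

instance : Fintype T1 where
  elems := {.one, .e, .f, .theta}
  complete := by intro x; cases x <;> simp

instance : Monoid T1 where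
  one := .one
  mul x y :=
    match x, y with
    | .one, y => y
    | x, .one => x
    | .theta, _ => .theta
    | _, .theta => .theta
    | _, .e => .e
    | _, .f => .f
  mul_assoc := by decide
  one_mul := by decide
  mul_one := by decide

/-- The contracted semigroup algebra `ℚ₀T¹`: the quotient of the monoid algebra
`ℚ[T¹]` by the two-sided ideal spanned by `θ`. -/
noncomputable abbrev Q0T1 : Type :=
  (TwoSidedIdeal.span {MonoidAlgebra.single T1.theta (1 : ℚ)}).ringCon.Quotient

/-- The `ℚ`-algebra structure on the quotient of a `ℚ`-algebra by a two-sided ideal. -/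
noncomputable instance quotAlgebra {A : Type*} [Ring A] [Algebra ℚ A]
    (I : TwoSidedIdeal A) : Algebra ℚ I.ringCon.Quotient :=
  RingHom.toAlgebra'
    ((I.ringCon.mk' : A →+* I.ringCon.Quotient).comp (algebraMap ℚ A))
    (fun q x => Quotient.inductionOn' x fun a => by
      show (I.ringCon.mk' (algebraMap ℚ A q)) * I.ringCon.mk' a
          = I.ringCon.mk' a * I.ringCon.mk' (algebraMap ℚ A q)
      rw [← map_mul, ← map_mul, Algebra.commutes])



/-- The canonical projection from `ℚ[T¹]` onto the contracted algebra `ℚ₀T¹`. -/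
noncomputable def q0mk : MonoidAlgebra ℚ T1 →+* Q0T1 :=
  (TwoSidedIdeal.span {MonoidAlgebra.single T1.theta (1 : ℚ)}).ringCon.mk'

/-!
The algebra `ℚ₀T¹` is spanned by `1`, `e` and `e - f`. The two characters of `T¹` vanishing at `θ`
(one killing `e` and `f`, one trivial on `1, e, f`) induce a surjection `ℚ₀T¹ → ℚ × ℚ` whose kernel
is the line through `e - f`, and `(e - f)² = e - f - e + f = 0`. An ideal of nilpotent elements
lies in the Jacobson radical, while the radical lies in the kernel of any surjection onto the
semisimple ring `ℚ × ℚ`; so the radical is exactly that line.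
-/

theorem Ideal.mem_jacobson_bot_of_forall_isNilpotent_mul {R : Type*} [Ring R] {x : R}
    (h : ∀ y, IsNilpotent (y * x)) : x ∈ (⊥ : Ideal R).jacobson := by
  refine Ideal.mem_jacobson_iff.mpr fun y ↦ ?_
  obtain ⟨u, hu⟩ := (h y).isUnit_add_one
  refine ⟨↑u⁻¹, ?_⟩
  rw [Submodule.mem_bot, mul_assoc, sub_eq_zero, ← mul_add_one (↑u⁻¹ : R), ← hu, Units.inv_mul]

theorem RingHom.ker_eq_jacobson_bot_of_isNilpotent {R S : Type*} [Ring R] [Ring S]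
    (hS : Ring.jacobson S = ⊥) {φ : R →+* S} (hφ : Function.Surjective φ)
    (hnil : ∀ x ∈ RingHom.ker φ, IsNilpotent x) :
    RingHom.ker φ = (⊥ : Ideal R).jacobson := by
  have : RingHomSurjective φ := ⟨hφ⟩
  refine le_antisymm (fun x hx ↦ ?_) ?_
  · refine Ideal.mem_jacobson_bot_of_forall_isNilpotent_mul fun y ↦ hnil _ ?_
    rw [RingHom.mem_ker] at hx ⊢
    rw [map_mul, hx, mul_zero]
  · rw [Ideal.jacobson_bot, RingHom.ker_eq_comap_bot, ← hS]
    exact Ring.le_comap_jacobson φ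

theorem Submodule.mul_eq_zero_of_mem_span_singleton {R A : Type*} [CommSemiring R] [Semiring A]
    [Algebra R A] {d a b : A} (hd : d * d = 0) (ha : a ∈ span R {d}) (hb : b ∈ span R {d}) :
    a * b = 0 := by
  obtain ⟨r, rfl⟩ := mem_span_singleton.mp ha
  obtain ⟨s, rfl⟩ := mem_span_singleton.mp hb
  rw [smul_mul_smul_comm, hd, smul_zero]

open MonoidAlgebra

namespace T1

def toProd : T1 →* ℚ × ℚ where
  toFun
    | .one => (1, 1)
    | .e => (0, 1)
    | .f => (0, 1)
    | .theta => 0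
  map_one' := rfl
  map_mul' := by rintro (_ | _ | _ | _) (_ | _ | _ | _) <;> norm_num

end T1

namespace Q0T1

noncomputable def toProd : Q0T1 →ₐ[ℚ] ℚ × ℚ :=
  let F := MonoidAlgebra.lift ℚ (ℚ × ℚ) T1 T1.toProd
  have hθ : TwoSidedIdeal.span {single T1.theta (1 : ℚ)} ≤ TwoSidedIdeal.ker F := by
    rw [TwoSidedIdeal.span_le, Set.singleton_subset_iff, SetLike.mem_coe, TwoSidedIdeal.mem_ker]
    simp [F, T1.toProd]
  RingCon.liftₐ _ F fun _ _ h ↦ (RingCon.ker_apply _).mpr (TwoSidedIdeal.ringCon_le_iff.mp hθ h)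

theorem toProd_q0mk_single (t : T1) (c : ℚ) : toProd (q0mk (single t c)) = c • T1.toProd t := by
  simp [toProd, q0mk]

theorem q0mk_smul (c : ℚ) (x : MonoidAlgebra ℚ T1) : q0mk (c • x) = c • q0mk x :=
  map_smul (RingCon.mkₐ ℚ _) c x

theorem q0mk_single (t : T1) (c : ℚ) : q0mk (single t c) = c • q0mk (single t 1) := by
  rw [← q0mk_smul, smul_single', mul_one]

theorem q0mk_single_theta (c : ℚ) : q0mk (single T1.theta c) = 0 := by
  have hθ : q0mk (single T1.theta 1) = 0 := by
    rw [q0mk, ← TwoSidedIdeal.mem_ker, TwoSidedIdeal.ker_ringCon_mk']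
    exact TwoSidedIdeal.subset_span rfl
  rw [q0mk_single, hθ, smul_zero]

noncomputable def e : Q0T1 := q0mk (single T1.e 1)

noncomputable def f : Q0T1 := q0mk (single T1.f 1)

theorem e_sub_f_mul_self : (e - f) * (e - f) = 0 := by
  have hmul (s t : T1) : q0mk (single s 1) * q0mk (single t 1) = q0mk (single (s * t) 1) := by
    rw [← map_mul, single_mul_single, mul_one]
  rw [sub_mul, mul_sub, mul_sub, e, f, hmul, hmul, hmul, hmul]
  exact sub_self (q0mk (single T1.e 1) - q0mk (single T1.f 1))

theorem exists_eq_smul_one_add (x : Q0T1) :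
    ∃ a b c : ℚ, x = a • 1 + b • e + c • (e - f) := by
  obtain ⟨x, rfl⟩ : ∃ g, q0mk g = x := RingCon.mk'_surjective _ x
  induction x using MonoidAlgebra.induction_linear with
  | zero => exact ⟨0, 0, 0, by rw [map_zero]; module⟩
  | add x y hx hy =>
    obtain ⟨a, b, c, hx⟩ := hx
    obtain ⟨a', b', c', hy⟩ := hy
    refine ⟨a + a', b + b', c + c', ?_⟩
    rw [map_add, hx, hy]
    module
  | single t c =>
    cases t with
    | one =>
      exact ⟨c, 0, 0, by rw [q0mk_single, show single T1.one (1 : ℚ) = 1 from rfl, map_one]; module⟩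
    | e => exact ⟨0, c, 0, by rw [q0mk_single, ← e]; module⟩
    | f => exact ⟨0, c, -c, by rw [q0mk_single, ← f]; module⟩
    | theta => exact ⟨0, 0, 0, by rw [q0mk_single_theta]; module⟩

theorem toProd_smul_one_add (a b c : ℚ) : toProd (a • 1 + b • e + c • (e - f)) = (a, a + b) := by
  simp [e, f, toProd_q0mk_single, T1.toProd, Prod.ext_iff]

theorem toProd_surjective : Function.Surjective toProd := fun p ↦
  ⟨p.1 • 1 + (p.2 - p.1) • e + (0 : ℚ) • (e - f), by rw [toProd_smul_one_add, add_sub_cancel]⟩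

theorem toProd_eq_zero_iff {x : Q0T1} : toProd x = 0 ↔ x ∈ Submodule.span ℚ {e - f} := by
  refine ⟨fun hx ↦ ?_, fun hx ↦ ?_⟩
  · obtain ⟨a, b, c, rfl⟩ := exists_eq_smul_one_add x
    obtain ⟨rfl, hb⟩ := Prod.mk_eq_zero.mp ((toProd_smul_one_add a b c).symm.trans hx)
    obtain rfl : b = 0 := by rwa [zero_add] at hb
    exact Submodule.mem_span_singleton.mpr ⟨c, by module⟩
  · have h : toProd (e - f) = 0 := by simpa [Prod.ext_iff] using toProd_smul_one_add 0 0 1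
    obtain ⟨c, rfl⟩ := Submodule.mem_span_singleton.mp hx
    rw [map_smul, h, smul_zero]

theorem ker_toProd_eq_jacobson : RingHom.ker toProd = (⊥ : Ideal Q0T1).jacobson := by
  refine RingHom.ker_eq_jacobson_bot_of_isNilpotent (IsSemisimpleRing.jacobson_eq_bot _)
    toProd_surjective fun x hx ↦ ⟨2, ?_⟩
  have hx' := toProd_eq_zero_iff.mp hx
  rw [pow_two]
  exact Submodule.mul_eq_zero_of_mem_span_singleton e_sub_f_mul_self hx' hx'

end Q0T1

theorem jacobson_radical_Q0T1_eq_span_e_sub_f :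
    (((⊥ : Ideal Q0T1).jacobson : Set Q0T1) =
      (Submodule.span ℚ {q0mk (MonoidAlgebra.single T1.e 1 - MonoidAlgebra.single T1.f 1)} :
        Submodule ℚ Q0T1)) ∧
    (∀ a ∈ (⊥ : Ideal Q0T1).jacobson, ∀ r : Q0T1,
      r * a ∈ (⊥ : Ideal Q0T1).jacobson ∧ a * r ∈ (⊥ : Ideal Q0T1).jacobson) ∧
    (∀ a ∈ (⊥ : Ideal Q0T1).jacobson, ∀ b ∈ (⊥ : Ideal Q0T1).jacobson, a * b = 0) ∧
    ∃ φ : Q0T1 →ₐ[ℚ] ℚ × ℚ,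
      Function.Surjective φ ∧ RingHom.ker φ = (⊥ : Ideal Q0T1).jacobson := by
  have mem_jacobson_iff (x : Q0T1) :
      x ∈ (⊥ : Ideal Q0T1).jacobson ↔ x ∈ Submodule.span ℚ {Q0T1.e - Q0T1.f} := by
    rw [← Q0T1.ker_toProd_eq_jacobson, RingHom.mem_ker, Q0T1.toProd_eq_zero_iff]
  have hd : q0mk (single T1.e 1 - single T1.f 1) = Q0T1.e - Q0T1.f := map_sub q0mk _ _
  refine ⟨?_, fun a ha r ↦ ⟨Ideal.mul_mem_left _ r ha, Ideal.mul_mem_right r _ ha⟩, ?_,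
    Q0T1.toProd, Q0T1.toProd_surjective, Q0T1.ker_toProd_eq_jacobson⟩
  · ext x
    rw [SetLike.mem_coe, SetLike.mem_coe, hd, mem_jacobson_iff]
  · intro a ha b hb
    exact Submodule.mul_eq_zero_of_mem_span_singleton Q0T1.e_sub_f_mul_self
      ((mem_jacobson_iff a).mp ha) ((mem_jacobson_iff b).mp hb)
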